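/- Let U_T, U_T^ε ∈ ℝⁿ satisfy ‖U_T − U_T^ε‖ ≤ ε for some ε > 0, let 0 ≤ t ≤ T, and let M_ε > 0. Then the total error between the exact solution and the regularized noisy solution satisfies ‖U(t) − P^ε U^ε(t)‖ ≤ M_ε^{-1} ‖U′(t)‖ + e^{M_ε(T−t)} ε, where U′(t) = − Σ_{i=1}^n λ_i e^{λ_i(T−t)} ⟨U_T, φ_i⟩ φ_i. (Estimate (eee) of the paper's Theorem 4.) -/

import Mathlib

/-!
Split the error along the cut-off into the discarded modes of `U(t)` and the propagated noise on
the retained modes, and compare coefficients in the basis `φ` (Parseval). A discarded mode has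
`λᵢ > M_ε`, so its coefficient is at most `M_ε⁻¹` times that of `U′(t)`; a retained mode is
amplified by `e^{λᵢ(T−t)} ≤ e^{M_ε(T−t)}`, so the noise contributes at most
`e^{M_ε(T−t)} ‖U_T − U_T^ε‖`.
-/

open scoped RealInnerProductSpace

theorem Finset.sum_smul_sub_sum_filter_smul {ι R M : Type*} [Ring R] [AddCommGroup M]
    [Module R M] (s : Finset ι) (p : ι → Prop) [DecidablePred p] (f g : ι → R) (v : ι → M) :
    ∑ i ∈ s, f i • v i - ∑ i ∈ s with p i, g i • v i
      = ∑ i ∈ s with ¬p i, f i • v i + ∑ i ∈ s with p i, (f i - g i) • v i := by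
  rw [← Finset.sum_filter_add_sum_filter_not s p]
  simp only [sub_smul, Finset.sum_sub_distrib]
  abel

namespace Orthonormal

variable {ι E : Type*} [NormedAddCommGroup E] [InnerProductSpace ℝ E] {v : ι → E}

theorem norm_sum_smul_sq (hv : Orthonormal ℝ v) (a : ι → ℝ) (s : Finset ι) :
    ‖∑ i ∈ s, a i • v i‖ ^ 2 = ∑ i ∈ s, a i ^ 2 := by
  rw [← real_inner_self_eq_norm_sq, hv.inner_sum]
  simp only [conj_trivial, sq]

theorem norm_sum_smul_le_of_abs_le (hv : Orthonormal ℝ v) {s t : Finset ι} (hst : s ⊆ t)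
    {a b : ι → ℝ} (hab : ∀ i ∈ s, |a i| ≤ |b i|) :
    ‖∑ i ∈ s, a i • v i‖ ≤ ‖∑ i ∈ t, b i • v i‖ := by
  rw [← pow_le_pow_iff_left₀ (norm_nonneg _) (norm_nonneg _) two_ne_zero,
    hv.norm_sum_smul_sq, hv.norm_sum_smul_sq]
  calc ∑ i ∈ s, a i ^ 2 ≤ ∑ i ∈ s, b i ^ 2 :=
        Finset.sum_le_sum fun i hi => sq_le_sq.mpr (hab i hi)
    _ ≤ ∑ i ∈ t, b i ^ 2 :=
        Finset.sum_le_sum_of_subset_of_nonneg hst fun i _ _ => sq_nonneg _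

end Orthonormal

section CutOff

variable {ι E : Type*} [Fintype ι] [NormedAddCommGroup E] [InnerProductSpace ℝ E]

theorem OrthonormalBasis.norm_sum_const_mul_inner_smul (b : OrthonormalBasis ι ℝ E) (c : ℝ)
    (x : E) : ‖∑ i, (c * ⟪x, b i⟫) • b i‖ = |c| * ‖x‖ := by
  simp_rw [mul_smul, ← Finset.smul_sum, real_inner_comm _ x, b.sum_repr', norm_smul,
    Real.norm_eq_abs]

theorem Orthonormal.norm_sum_filter_not_le_smul_le {v : ι → E} (hv : Orthonormal ℝ v)
    (lam a : ι → ℝ) {M : ℝ} (hM : 0 < M) :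
    ‖∑ i with ¬lam i ≤ M, a i • v i‖ ≤ M⁻¹ * ‖∑ i, (lam i * a i) • v i‖ := by
  calc ‖∑ i with ¬lam i ≤ M, a i • v i‖
      ≤ ‖∑ i, (M⁻¹ * (lam i * a i)) • v i‖ := by
        refine hv.norm_sum_smul_le_of_abs_le (Finset.subset_univ _) fun i hi => ?_
        have hlt : M < lam i := not_le.mp (Finset.mem_filter.mp hi).2
        have hcoef : 0 < M⁻¹ * lam i := mul_pos (inv_pos.mpr hM) (hM.trans hlt)
        rw [← mul_assoc, abs_mul, abs_of_pos hcoef]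
        exact le_mul_of_one_le_left (abs_nonneg _) ((one_le_inv_mul₀ hM).mpr hlt.le)
    _ = M⁻¹ * ‖∑ i, (lam i * a i) • v i‖ := by
        simp_rw [mul_smul, ← Finset.smul_sum, norm_smul,
          Real.norm_of_nonneg (inv_nonneg.mpr hM.le)]

theorem OrthonormalBasis.norm_sum_filter_le_exp_mul_inner_smul_le (b : OrthonormalBasis ι ℝ E)
    (lam : ι → ℝ) {M s : ℝ} (hs : 0 ≤ s) (x : E) :
    ‖∑ i with lam i ≤ M, (Real.exp (lam i * s) * ⟪x, b i⟫) • b i‖ ≤ Real.exp (M * s) * ‖x‖ := by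
  calc ‖∑ i with lam i ≤ M, (Real.exp (lam i * s) * ⟪x, b i⟫) • b i‖
      ≤ ‖∑ i, (Real.exp (M * s) * ⟪x, b i⟫) • b i‖ := by
        refine b.orthonormal.norm_sum_smul_le_of_abs_le (Finset.subset_univ _) fun i hi => ?_
        have hle : lam i ≤ M := (Finset.mem_filter.mp hi).2
        rw [abs_mul, abs_mul, abs_of_pos (Real.exp_pos _), abs_of_pos (Real.exp_pos _)]
        gcongr
    _ = Real.exp (M * s) * ‖x‖ := by
        rw [b.norm_sum_const_mul_inner_smul, abs_of_pos (Real.exp_pos _)]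

end CutOff

theorem total_error_bound_general (n : ℕ)
    (φ : OrthonormalBasis (Fin n) ℝ (EuclideanSpace ℝ (Fin n)))
    (lam : Fin n → ℝ)
    (Me : ℝ) (hMe : 0 < Me)
    (T t : ℝ) (htT : t ≤ T)
    (UT UTe : EuclideanSpace ℝ (Fin n)) (ε : ℝ)
    (hnoise : ‖UT - UTe‖ ≤ ε) :
    ‖(∑ i : Fin n, (Real.exp (lam i * (T - t)) * ⟪UT, φ i⟫) • φ i) -
      ∑ i ∈ Finset.univ.filter (fun i => lam i ≤ Me),
        (Real.exp (lam i * (T - t)) * ⟪UTe, φ i⟫) • φ i‖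
      ≤ Me⁻¹ *
          ‖-∑ i : Fin n, (lam i * Real.exp (lam i * (T - t)) * ⟪UT, φ i⟫) • φ i‖
        + Real.exp (Me * (T - t)) * ε := by
  have hnoise_modes : ∀ i, Real.exp (lam i * (T - t)) * ⟪UT, φ i⟫
      - Real.exp (lam i * (T - t)) * ⟪UTe, φ i⟫
      = Real.exp (lam i * (T - t)) * ⟪UT - UTe, φ i⟫ :=
    fun i => by rw [inner_sub_left, mul_sub (Real.exp _)]
  rw [Finset.sum_smul_sub_sum_filter_smul]
  simp_rw [hnoise_modes, norm_neg, mul_assoc (lam _)]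
  calc _ ≤ _ + _ := norm_add_le _ _
    _ ≤ _ := add_le_add (φ.orthonormal.norm_sum_filter_not_le_smul_le lam _ hMe)
        ((φ.norm_sum_filter_le_exp_mul_inner_smul_le lam (sub_nonneg.mpr htT) _).trans
          (by gcongr))

/-- Estimate (eee) of the paper's Theorem 4:
`‖U(t) − P^ε U^ε(t)‖ ≤ M_ε⁻¹ ‖U′(t)‖ + e^{M_ε(T−t)} ε`. -/
theorem total_error_bound (n : ℕ) (hn : 0 < n)
    (φ : OrthonormalBasis (Fin n) ℝ (EuclideanSpace ℝ (Fin n)))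
    (lam : Fin n → ℝ) (hlam : ∀ i, 0 ≤ lam i)
    (Me : ℝ) (hMe : 0 < Me)
    (T t : ℝ) (hT : 0 < T) (ht0 : 0 ≤ t) (htT : t ≤ T)
    (UT UTe : EuclideanSpace ℝ (Fin n)) (ε : ℝ) (hε : 0 < ε)
    (hnoise : ‖UT - UTe‖ ≤ ε) :
    ‖(∑ i : Fin n, (Real.exp (lam i * (T - t)) * ⟪UT, φ i⟫) • φ i) -
      ∑ i ∈ Finset.univ.filter (fun i => lam i ≤ Me),
        (Real.exp (lam i * (T - t)) * ⟪UTe, φ i⟫) • φ i‖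
      ≤ Me⁻¹ *
          ‖-∑ i : Fin n, (lam i * Real.exp (lam i * (T - t)) * ⟪UT, φ i⟫) • φ i‖
        + Real.exp (Me * (T - t)) * ε :=
  total_error_bound_general n φ lam Me hMe T t htT UT UTe ε hnoise
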